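/- Let n be a finite index type, B : (n → ℝ) → (n → ℝ) → (n → ℝ) → ℝ a trilinear map, c : n → ℝ a fixed vector, and let (ε_i)_{i ∈ n} be independent real random variables on a probability space, each distributed as a centered Gaussian with variance σ². Then the noisy bispectrum B(c+ε, c+ε, c+ε) is integrable and its expectation equals 𝔼[B(c+ε, c+ε, c+ε)] = B(c, c, c) + σ² · ∑_{i ∈ n} ( B(e_i, e_i, c) + B(e_i, c, e_i) + B(c, e_i, e_i) ), where e_i denotes the i-th standard basis vector. In particular, all first-order terms (linear in ε) and the third-order term B(ε, ε, ε) have zero expectation. -/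

import Mathlib

/-!
The coordinates of `ε` are independent and each is symmetric, so the noise vector `ε` has the
same law as `-ε`. Hence every odd function of `ε` (the first-order terms and `B ε ε ε`) has zero
mean, and `𝔼[F ε] = 𝔼[(F ε + F (-ε)) / 2]` for `F x = B (c + x) (c + x) (c + x)`; that even part is
`B c c c` plus a bilinear form `β x x`. Expanding `β` in the standard basis,
`𝔼[β ε ε] = ∑ i j, 𝔼[ε i * ε j] β eᵢ eⱼ = σ² ∑ i, β eᵢ eᵢ`, since `𝔼[ε i * ε j] = σ² δᵢⱼ` by
independence and centering. Integrability comes from Hölder, Gaussians having all moments.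
-/

open MeasureTheory ProbabilityTheory

section Coordinates

variable {n R M : Type*} [Fintype n] [DecidableEq n] [CommSemiring R] [AddCommMonoid M]
  [Module R M]

theorem LinearMap.apply_eq_sum_single (f : (n → R) →ₗ[R] M) (x : n → R) :
    f x = ∑ i, x i • f (Pi.single i 1) := by
  convert f.pi_apply_eq_sum_univ x using 4 with i
  ext j
  simp [Pi.single_apply, eq_comm]

theorem LinearMap.apply₂_eq_sum_single (β : (n → R) →ₗ[R] (n → R) →ₗ[R] R) (x y : n → R) :
    β x y = ∑ i, ∑ j, x i * y j * β (Pi.single i 1) (Pi.single j 1) := by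
  simp only [β.apply_eq_sum_single x, LinearMap.sum_apply, LinearMap.smul_apply,
    (β _).apply_eq_sum_single y, smul_eq_mul, Finset.mul_sum, mul_assoc]

theorem LinearMap.apply₃_eq_sum_single (B : (n → R) →ₗ[R] (n → R) →ₗ[R] (n → R) →ₗ[R] R)
    (x y z : n → R) :
    B x y z = ∑ i, ∑ j, ∑ k,
      x i * y j * z k * B (Pi.single i 1) (Pi.single j 1) (Pi.single k 1) := by
  simp only [B.apply_eq_sum_single x, LinearMap.sum_apply, LinearMap.smul_apply,
    (B _).apply₂_eq_sum_single y z, smul_eq_mul, Finset.mul_sum, mul_assoc]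

end Coordinates

theorem LinearMap.apply₃_add_add_apply₃_sub {R M : Type*} [CommRing R] [AddCommGroup M]
    [Module R M]
    (B : M →ₗ[R] M →ₗ[R] M →ₗ[R] R) (c x : M) :
    B (c + x) (c + x) (c + x) + B (c - x) (c - x) (c - x)
      = 2 * (B c c c + (B x x c + B x c x + B c x x)) := by
  simp only [map_add, map_sub, LinearMap.add_apply, LinearMap.sub_apply]
  ring

@[fun_prop]
theorem LinearMap.continuous_apply₃ {n α : Type*} [Fintype n] [DecidableEq n]
    [TopologicalSpace α]
    (B : (n → ℝ) →ₗ[ℝ] (n → ℝ) →ₗ[ℝ] (n → ℝ) →ₗ[ℝ] ℝ) {X Y Z : α → n → ℝ}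
    (hX : Continuous X) (hY : Continuous Y) (hZ : Continuous Z) :
    Continuous fun a => B (X a) (Y a) (Z a) := by
  simp_rw [B.apply₃_eq_sum_single (X _)]
  fun_prop

section Integrability

variable {Ω n : Type*} [MeasurableSpace Ω] {μ : Measure Ω} [Fintype n] [DecidableEq n]

theorem MeasureTheory.MemLp.integrable_mul_mul {f g h : Ω → ℝ} (hf : MemLp f 3 μ)
    (hg : MemLp g 3 μ) (hh : MemLp h 3 μ) : Integrable (fun ω => f ω * g ω * h ω) μ := by
  have hfg : MemLp (fun ω => f ω * g ω) (3⁻¹ + 3⁻¹)⁻¹ μ := hg.mul' hf (hpqr := .of 3 3)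
  have : ENNReal.HolderTriple (3⁻¹ + 3⁻¹)⁻¹ 3 1 :=
    ⟨by rw [inv_inv, inv_one, ENNReal.inv_three_add_inv_three]⟩
  exact hfg.integrable_mul hh

theorem integrable_apply₃_of_memLp (B : (n → ℝ) →ₗ[ℝ] (n → ℝ) →ₗ[ℝ] (n → ℝ) →ₗ[ℝ] ℝ)
    {X Y Z : Ω → n → ℝ} (hX : ∀ i, MemLp (fun ω => X ω i) 3 μ)
    (hY : ∀ i, MemLp (fun ω => Y ω i) 3 μ) (hZ : ∀ i, MemLp (fun ω => Z ω i) 3 μ) :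
    Integrable (fun ω => B (X ω) (Y ω) (Z ω)) μ := by
  simp_rw [B.apply₃_eq_sum_single (X _)]
  exact integrable_finsetSum _ fun i _ => integrable_finsetSum _ fun j _ =>
    integrable_finsetSum _ fun k _ => ((hX i).integrable_mul_mul (hY j) (hZ k)).mul_const _

theorem integrable_apply₂_of_memLp (β : (n → ℝ) →ₗ[ℝ] (n → ℝ) →ₗ[ℝ] ℝ)
    {X Y : Ω → n → ℝ} (hX : ∀ i, MemLp (fun ω => X ω i) 2 μ)
    (hY : ∀ i, MemLp (fun ω => Y ω i) 2 μ) :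
    Integrable (fun ω => β (X ω) (Y ω)) μ := by
  simp_rw [β.apply₂_eq_sum_single (X _)]
  exact integrable_finsetSum _ fun i _ => integrable_finsetSum _ fun j _ =>
    ((hX i).integrable_mul (hY j)).mul_const _

end Integrability

section Symmetry

variable {Ω E : Type*} [MeasurableSpace Ω] {μ : Measure Ω} [MeasurableSpace E] [Neg E]
  {X : Ω → E} {f : E → ℝ}

theorem integral_comp_eq_zero_of_odd (hX : IdentDistrib (-X) X μ μ) (hf : Measurable f)
    (hodd : ∀ x, f (-x) = -f x) : ∫ ω, f (X ω) ∂μ = 0 := by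
  have h : ∫ ω, f (-X ω) ∂μ = ∫ ω, f (X ω) ∂μ := (hX.comp hf).integral_eq
  simp only [hodd, integral_neg] at h
  linarith

theorem integral_comp_eq_integral_even_part (hX : IdentDistrib (-X) X μ μ) (hf : Measurable f)
    (hfX : Integrable (fun ω => f (X ω)) μ) :
    ∫ ω, f (X ω) ∂μ = ∫ ω, (f (X ω) + f (-X ω)) / 2 ∂μ := by
  have h : ∫ ω, f (-X ω) ∂μ = ∫ ω, f (X ω) ∂μ := (hX.comp hf).integral_eq
  have hfX' : Integrable (fun ω => f (-X ω)) μ := (hX.comp hf).integrable_iff.mpr hfX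
  rw [integral_div, integral_add hfX hfX', h]
  ring

end Symmetry

theorem ProbabilityTheory.iIndepFun.identDistrib_neg {Ω n E : Type*} [MeasurableSpace Ω]
    {μ : Measure Ω} [IsProbabilityMeasure μ] [Fintype n] [MeasurableSpace E] [Neg E]
    [MeasurableNeg E]
    {ε : n → Ω → E} (hindep : iIndepFun ε μ) (hmeas : ∀ i, Measurable (ε i))
    (hsymm : ∀ i, IdentDistrib (-ε i) (ε i) μ μ) :
    IdentDistrib (-fun ω i => ε i ω) (fun ω i => ε i ω) μ μ := by
  have hneg : iIndepFun (fun i => -ε i) μ :=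
    hindep.comp (fun _ => Neg.neg) fun _ => measurable_neg
  refine ⟨(measurable_pi_lambda _ hmeas).neg.aemeasurable,
    (measurable_pi_lambda _ hmeas).aemeasurable, ?_⟩
  calc μ.map (-fun ω i => ε i ω) = Measure.pi fun i => μ.map (-ε i) :=
        (iIndepFun_iff_map_fun_eq_pi_map fun i => (hmeas i).neg.aemeasurable).mp hneg
    _ = Measure.pi fun i => μ.map (ε i) := by
        congr 1
        exact funext fun i => (hsymm i).map_eq
    _ = μ.map (fun ω i => ε i ω) :=
        ((iIndepFun_iff_map_fun_eq_pi_map fun i => (hmeas i).aemeasurable).mp hindep).symm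

section SecondMoments

variable {Ω n : Type*} [MeasurableSpace Ω] {μ : Measure Ω} [DecidableEq n]
  {ε : n → Ω → ℝ} {s : ℝ}

theorem integral_mul_eq_ite_of_iIndepFun (hindep : iIndepFun ε μ) (hL2 : ∀ i, MemLp (ε i) 2 μ)
    (hmean : ∀ i, ∫ ω, ε i ω ∂μ = 0) (hsq : ∀ i, ∫ ω, ε i ω ^ 2 ∂μ = s) (i j : n) :
    ∫ ω, ε i ω * ε j ω ∂μ = if i = j then s else 0 := by
  split_ifs with hij
  · subst hij
    simp_rw [← sq, hsq]
  · rw [(hindep.indepFun hij).integral_fun_mul_eq_mul_integral (hL2 i).1 (hL2 j).1, hmean i,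
      zero_mul]

theorem integral_apply₂_self_of_iIndepFun [Fintype n] (hindep : iIndepFun ε μ)
    (hL2 : ∀ i, MemLp (ε i) 2 μ)
    (hmean : ∀ i, ∫ ω, ε i ω ∂μ = 0) (hsq : ∀ i, ∫ ω, ε i ω ^ 2 ∂μ = s)
    (β : (n → ℝ) →ₗ[ℝ] (n → ℝ) →ₗ[ℝ] ℝ) :
    ∫ ω, β (fun i => ε i ω) (fun i => ε i ω) ∂μ = s * ∑ i, β (Pi.single i 1) (Pi.single i 1) := by
  have hint : ∀ i j, Integrable (fun ω => ε i ω * ε j ω) μ := fun i j =>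
    (hL2 i).integrable_mul (hL2 j)
  simp_rw [β.apply₂_eq_sum_single (fun i => ε i _)]
  rw [integral_finsetSum _ fun i _ => integrable_finsetSum _ fun j _ => (hint i j).mul_const _]
  simp_rw [integral_finsetSum _ fun j _ => (hint _ j).mul_const _, integral_mul_const,
    integral_mul_eq_ite_of_iIndepFun hindep hL2 hmean hsq, ite_mul, zero_mul,
    Finset.sum_ite_eq, Finset.mem_univ, if_true, Finset.mul_sum]

end SecondMoments

namespace ProbabilityTheory.HasLaw

variable {Ω : Type*} [MeasurableSpace Ω] {μ : Measure Ω} {X : Ω → ℝ} {v : NNReal}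

theorem identDistrib_neg_of_gaussianReal (hX : HasLaw X (gaussianReal 0 v) μ) :
    IdentDistrib (-X) X μ μ :=
  ⟨hX.aemeasurable.neg, hX.aemeasurable, by
    rw [(gaussianReal_neg hX).map_eq, hX.map_eq, neg_zero]⟩

theorem memLp_of_gaussianReal (hX : HasLaw X (gaussianReal 0 v) μ) (p : NNReal) :
    MemLp X p μ := by
  have h : IdentDistrib X id μ (gaussianReal 0 v) :=
    ⟨hX.aemeasurable, aemeasurable_id, by rw [hX.map_eq, Measure.map_id]⟩
  exact h.memLp_iff.mpr (memLp_id_gaussianReal p)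

theorem integral_eq_zero_of_gaussianReal (hX : HasLaw X (gaussianReal 0 v) μ) :
    ∫ ω, X ω ∂μ = 0 :=
  hX.integral_eq.trans integral_id_gaussianReal

theorem integral_sq_of_gaussianReal (hX : HasLaw X (gaussianReal 0 v) μ) :
    ∫ ω, X ω ^ 2 ∂μ = v := by
  rw [← variance_of_integral_eq_zero hX.aemeasurable hX.integral_eq_zero_of_gaussianReal,
    hX.variance_eq, variance_id_gaussianReal]

end ProbabilityTheory.HasLaw

/-- **Expected bispectrum under additive i.i.d. centered Gaussian noise.**
For a trilinear map `B` on `n → ℝ`, a fixed vector `c`, and independent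
centered Gaussian random variables `ε i` of variance `σ²`, the noisy
bispectrum `B (c+ε) (c+ε) (c+ε)` is integrable with expectation
`B c c c + σ² ∑ i (B eᵢ eᵢ c + B eᵢ c eᵢ + B c eᵢ eᵢ)`; in particular
all first-order terms and the third-order term have zero expectation. -/
theorem expected_noisy_bispectrum
    {n : Type*} [Fintype n] [DecidableEq n]
    (B : (n → ℝ) →ₗ[ℝ] (n → ℝ) →ₗ[ℝ] (n → ℝ) →ₗ[ℝ] ℝ)
    (c : n → ℝ)
    {Ω : Type*} [MeasurableSpace Ω] (μ : Measure Ω) [IsProbabilityMeasure μ]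
    (ε : n → Ω → ℝ)
    (hmeas : ∀ i, Measurable (ε i))
    (hindep : iIndepFun ε μ)
    (σ2 : NNReal)
    (hgauss : ∀ i, Measure.map (ε i) μ = gaussianReal 0 σ2) :
    Integrable
        (fun ω => B (fun j => c j + ε j ω) (fun j => c j + ε j ω)
          (fun j => c j + ε j ω)) μ ∧
    (∫ ω, B (fun j => c j + ε j ω) (fun j => c j + ε j ω)
        (fun j => c j + ε j ω) ∂μ)
      = B c c c
        + (σ2 : ℝ) * ∑ i : n,
            (B (Pi.single i 1) (Pi.single i 1) c
              + B (Pi.single i 1) c (Pi.single i 1)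
              + B c (Pi.single i 1) (Pi.single i 1)) ∧
    (∫ ω, B (fun j => ε j ω) c c ∂μ) = 0 ∧
    (∫ ω, B c (fun j => ε j ω) c ∂μ) = 0 ∧
    (∫ ω, B c c (fun j => ε j ω) ∂μ) = 0 ∧
    (∫ ω, B (fun j => ε j ω) (fun j => ε j ω) (fun j => ε j ω) ∂μ) = 0 := by
  have hlaw (i : n) : HasLaw (ε i) (gaussianReal 0 σ2) μ := ⟨(hmeas i).aemeasurable, hgauss i⟩
  have hsymm : IdentDistrib (-fun ω j => ε j ω) (fun ω j => ε j ω) μ μ :=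
    hindep.identDistrib_neg hmeas fun i => (hlaw i).identDistrib_neg_of_gaussianReal
  have hodd (f : (n → ℝ) → ℝ) (hf : Continuous f) (hf_odd : ∀ x, f (-x) = -f x) :
      ∫ ω, f (fun j => ε j ω) ∂μ = 0 :=
    integral_comp_eq_zero_of_odd hsymm hf.measurable hf_odd
  have hL2 (i : n) : MemLp (ε i) 2 μ := (hlaw i).memLp_of_gaussianReal 2
  have hL3 (i : n) : MemLp (fun ω => c i + ε i ω) 3 μ :=
    (memLp_const (c i)).add ((hlaw i).memLp_of_gaussianReal 3)
  have hint := integrable_apply₃_of_memLp B hL3 hL3 hL3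
  refine ⟨hint, ?_, hodd (B · c c) (by fun_prop) (by simp),
    hodd (B c · c) (by fun_prop) (by simp), hodd (B c c ·) (by fun_prop) (by simp),
    hodd (fun x => B x x x) (by fun_prop) (by simp)⟩
  let β := B.compr₂ (LinearMap.applyₗ c) + B.flip c + B c
  calc ∫ ω, (fun x => B (c + x) (c + x) (c + x)) (fun j => ε j ω) ∂μ
      = ∫ ω, B c c c + β (fun j => ε j ω) (fun j => ε j ω) ∂μ := by
        have hF : Continuous fun x => B (c + x) (c + x) (c + x) := by fun_prop
        rw [integral_comp_eq_integral_even_part hsymm hF.measurable hint]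
        congr 1 with ω
        rw [← sub_eq_add_neg, B.apply₃_add_add_apply₃_sub, mul_div_cancel_left₀ _ two_ne_zero]
        rfl
    _ = B c c c + σ2 * ∑ i, β (Pi.single i 1) (Pi.single i 1) := by
        rw [integral_add (integrable_const _) (integrable_apply₂_of_memLp β hL2 hL2),
          integral_const, probReal_univ, one_smul,
          integral_apply₂_self_of_iIndepFun hindep hL2
            (fun i => (hlaw i).integral_eq_zero_of_gaussianReal)
            (fun i => (hlaw i).integral_sq_of_gaussianReal)]
    _ = _ := by simp [β]
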